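/- For every n ≥ 6, with D₁ and D₂ the specific dimension types defined in the context, one has B_n = D₁ ⊕ D₂ + 1 (equality of functions on σ). (This is the identity used in the proof of the main theorem that every finite dimensional Boltyanskii compactum of dimension ≥ 6 admits a dimensionally exotic map.) -/

import Mathlib

/-- The Bockstein index set σ: the symbol ℚ together with, for every prime `p`,
the symbols ℤ_p, ℤ_{p^∞} and ℤ_{(p)}. -/
inductive Bock : Type
  | Q : Bock
  | Zp (p : Nat.Primes) : Bock
  | ZpInf (p : Nat.Primes) : Bock
  | Zloc (p : Nat.Primes) : Bock

/-- `D` is `p`-regular: `D(ℤ_{(p)}) = D(ℤ_p) = D(ℤ_{p^∞}) = D(ℚ)`. -/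
def pRegular (D : Bock → ℕ) (p : Nat.Primes) : Prop :=
  D (.Zloc p) = D (.Zp p) ∧ D (.Zp p) = D (.ZpInf p) ∧ D (.ZpInf p) = D .Q

/-- `D` is `p⁺`-singular: `D(ℤ_{p^∞}) = D(ℤ_p)` and
`D(ℤ_{(p)}) = max (D(ℚ)) (D(ℤ_{p^∞}) + 1)`. -/
def pPlusSingular (D : Bock → ℕ) (p : Nat.Primes) : Prop :=
  D (.ZpInf p) = D (.Zp p) ∧ D (.Zloc p) = max (D .Q) (D (.ZpInf p) + 1)

/-- `D` is `p⁻`-singular: `D(ℤ_p) ≥ 1`, `D(ℤ_{p^∞}) = D(ℤ_p) - 1` and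
`D(ℤ_{(p)}) = max (D(ℚ)) (D(ℤ_{p^∞}) + 1)`. -/
def pMinusSingular (D : Bock → ℕ) (p : Nat.Primes) : Prop :=
  1 ≤ D (.Zp p) ∧ D (.ZpInf p) = D (.Zp p) - 1 ∧
    D (.Zloc p) = max (D .Q) (D (.ZpInf p) + 1)

instance (D : Bock → ℕ) (p : Nat.Primes) : Decidable (pRegular D p) := by
  unfold pRegular; infer_instance

instance (D : Bock → ℕ) (p : Nat.Primes) : Decidable (pPlusSingular D p) := by
  unfold pPlusSingular; infer_instance

instance (D : Bock → ℕ) (p : Nat.Primes) : Decidable (pMinusSingular D p) := by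
  unfold pMinusSingular; infer_instance

/-- A dimension type: for every prime `p`, `D` is `p`-regular, `p⁺`-singular
or `p⁻`-singular. -/
def DimensionType (D : Bock → ℕ) : Prop :=
  ∀ p : Nat.Primes, pRegular D p ∨ pPlusSingular D p ∨ pMinusSingular D p

/-- The `p`-singularity sign ε of `D`: `+1` if `p⁺`-singular, `-1` if
`p⁻`-singular, `0` otherwise (i.e. `p`-regular, for dimension types). -/
def bsign (D : Bock → ℕ) (p : Nat.Primes) : ℤ :=
  if pPlusSingular D p then 1 else if pMinusSingular D p then -1 else 0

/-- The product of signs: `ε⊗0 = 0⊗ε = ε`, `ε⊗ε = ε`, `+⊗− = −⊗+ = −`. -/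
def signMul (a b : ℤ) : ℤ :=
  if a = 0 then b else if b = 0 then a else if a = b then a else -1

/-- The operation `D₁ ⊞ D₂` suggested by the Bockstein product theorem. -/
def boxplus (D₁ D₂ : Bock → ℕ) : Bock → ℕ := fun G =>
  match G with
  | .Q => D₁ .Q + D₂ .Q
  | .Zp p => D₁ (.Zp p) + D₂ (.Zp p)
  | .ZpInf p =>
      let e := signMul (bsign D₁ p) (bsign D₂ p)
      let q := D₁ .Q + D₂ .Q
      let s := D₁ (.Zp p) + D₂ (.Zp p)
      if e = 0 then q else if e = 1 then s else s - 1
  | .Zloc p =>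
      let e := signMul (bsign D₁ p) (bsign D₂ p)
      let q := D₁ .Q + D₂ .Q
      let s := D₁ (.Zp p) + D₂ (.Zp p)
      if e = 0 then q else if e = 1 then max q (s + 1) else max q s

/-- The involution `D ↦ D*` exchanging the decorations `+` and `−`. -/
def dual (D : Bock → ℕ) : Bock → ℕ := fun G =>
  match G with
  | .Q => D .Q
  | .Zp p => D (.Zp p)
  | .ZpInf p =>
      if pPlusSingular D p then D (.Zp p) - 1
      else if pMinusSingular D p then D (.Zp p)
      else D (.ZpInf p)
  | .Zloc p =>
      if pPlusSingular D p then max (D .Q) (D (.Zp p))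
      else if pMinusSingular D p then max (D .Q) (D (.Zp p) + 1)
      else D (.Zloc p)

/-- The operation `D₁ ⊕ D₂ = (D₁* ⊞ D₂*)*`. -/
def oplus (D₁ D₂ : Bock → ℕ) : Bock → ℕ :=
  dual (boxplus (dual D₁) (dual D₂))

/-- The pointwise order on functions `σ → ℕ`. -/
def dle (D D' : Bock → ℕ) : Prop := ∀ G, D G ≤ D' G

/-- `dim D = n`: `D(G) ≤ n` for every `G ∈ σ` and `D(G) = n` for some `G ∈ σ`. -/
def dimEq (D : Bock → ℕ) (n : ℕ) : Prop :=
  (∀ G, D G ≤ n) ∧ ∃ G, D G = n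


/-- The function B_n: B_n(ℚ) = B_n(ℤ_p) = B_n(ℤ_{p^∞}) = n − 1 and
B_n(ℤ_{(p)}) = n for every prime p. -/
def Bolt (n : ℕ) : Bock → ℕ := fun G =>
  match G with
  | .Zloc _ => n
  | _ => n - 1


/-- The dimension type D₁: D₁(ℚ) = 2, D₁(ℤ_p) = 3, D₁(ℤ_{p^∞}) = 2,
D₁(ℤ_{(p)}) = 3 for every prime p (p⁻-singular at every prime). -/
def Dex₁ : Bock → ℕ := fun G =>
  match G with
  | .Q => 2
  | .Zp _ => 3
  | .ZpInf _ => 2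
  | .Zloc _ => 3

/-- The dimension type D₂: D₂(ℚ) = n − 4, D₂(ℤ_p) = D₂(ℤ_{p^∞}) = n − 5,
D₂(ℤ_{(p)}) = n − 4 for every prime p (p⁺-singular at every prime). -/
def Dex₂ (n : ℕ) : Bock → ℕ := fun G =>
  match G with
  | .Q => n - 4
  | .Zp _ => n - 5
  | .ZpInf _ => n - 5
  | .Zloc _ => n - 4

/-!
`D₁` is `p⁻`-singular and `D₂` is `p⁺`-singular at every prime. Dualising swaps the two kinds of
singularity, `⊞` of a `p⁺`- and a `p⁻`-singular function is `p⁻`-singular, and dualising back makes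
`D₁ ⊕ D₂` a `p⁺`-singular function. Such a function is determined by its values at `ℚ` and `ℤ_p`,
which are `2 + (n - 4) = 3 + (n - 5) = n - 2`; hence `D₁ ⊕ D₂` is `n - 2` except at `ℤ_{(p)}`,
where it is `n - 1`.
-/

section Singularity

variable {D D₁ D₂ : Bock → ℕ} {p : Nat.Primes}

lemma pMinusSingular.not_pPlusSingular (h : pMinusSingular D p) : ¬ pPlusSingular D p :=
  fun h' => by have := h.1; have := h.2.1; have := h'.1; omega

lemma bsign_of_pPlusSingular (h : pPlusSingular D p) : bsign D p = 1 :=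
  if_pos h

lemma bsign_of_pMinusSingular (h : pMinusSingular D p) : bsign D p = -1 := by
  rw [bsign, if_neg h.not_pPlusSingular, if_pos h]

lemma pMinusSingular_dual_of_pPlusSingular (h : pPlusSingular D p) (hp : 1 ≤ D (.Zp p)) :
    pMinusSingular (dual D) p := by
  refine ⟨hp, by simp only [dual, if_pos h], ?_⟩
  simp only [dual, if_pos h]
  omega

lemma pPlusSingular_dual_of_pMinusSingular (h : pMinusSingular D p) :
    pPlusSingular (dual D) p := by
  refine ⟨?_, ?_⟩ <;> simp only [dual, if_neg h.not_pPlusSingular, if_pos h]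

lemma pMinusSingular_boxplus (he : signMul (bsign D₁ p) (bsign D₂ p) = -1)
    (hs : 1 ≤ D₁ (.Zp p) + D₂ (.Zp p)) : pMinusSingular (boxplus D₁ D₂) p := by
  refine ⟨hs, by simp only [boxplus, he]; norm_num, ?_⟩
  simp only [boxplus, he]
  norm_num
  omega

lemma pPlusSingular_oplus (h₁ : pMinusSingular D₁ p) (h₂ : pPlusSingular D₂ p)
    (hp : 1 ≤ D₂ (.Zp p)) : pPlusSingular (oplus D₁ D₂) p := by
  have h₁' := pPlusSingular_dual_of_pMinusSingular h₁
  have h₂' := pMinusSingular_dual_of_pPlusSingular h₂ hp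
  have he : signMul (bsign (dual D₁) p) (bsign (dual D₂) p) = -1 := by
    rw [bsign_of_pPlusSingular h₁', bsign_of_pMinusSingular h₂']
    decide
  exact pPlusSingular_dual_of_pMinusSingular (pMinusSingular_boxplus he (le_add_left h₂'.1))

end Singularity

lemma pMinusSingular_Dex₁ (p : Nat.Primes) : pMinusSingular Dex₁ p :=
  ⟨show 1 ≤ 3 by decide, rfl, rfl⟩

lemma pPlusSingular_Dex₂ {n : ℕ} (hn : 5 ≤ n) (p : Nat.Primes) : pPlusSingular (Dex₂ n) p :=
  ⟨rfl, show n - 4 = max (n - 4) (n - 5 + 1) by omega⟩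

/-- For every n ≥ 6, one has B_n = D₁ ⊕ D₂ + 1 (equality of
functions on σ). -/
theorem bolt_eq_oplus_add_one (n : ℕ) (hn : 6 ≤ n) :
    Bolt n = fun G => oplus Dex₁ (Dex₂ n) G + 1 := by
  have h : ∀ p, pPlusSingular (oplus Dex₁ (Dex₂ n)) p := fun p =>
    pPlusSingular_oplus (pMinusSingular_Dex₁ p) (pPlusSingular_Dex₂ (by omega) p)
      (show 1 ≤ n - 5 by omega)
  funext G
  cases G with
  | Q => show n - 1 = 2 + (n - 4) + 1; omega
  | Zp p => show n - 1 = 3 + (n - 5) + 1; omega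
  | ZpInf p => rw [(h p).1]; show n - 1 = 3 + (n - 5) + 1; omega
  | Zloc p => rw [(h p).2, (h p).1]; show n = max (2 + (n - 4)) (3 + (n - 5) + 1) + 1; omega
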